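/- Let N ≥ 4 and let H be the N×N real symmetric matrix with entries H_{ij} = −cos(2π(i−j)/N) − 1/(2 − 2cos(2π(i−j)/N)) for i ≠ j and H_{ii} = −∑_{j≠i} H_{ij} (the Hessian of the potential V at the regular N-gon configuration θ_k = 2πk/N). Then H has at least one strictly positive eigenvalue and at least one strictly negative eigenvalue. -/

import Mathlib

open Real Matrix Finset

/-!
The Hessian is circulant, and since its rows sum to zero it acts as
`(H v)ₖ = ∑_{j ≠ k} Hₖⱼ (vⱼ - vₖ)`. Because its entries are an even `2π`-periodic function of
`θⱼ - θₖ`, the vectors `j ↦ cos (m θⱼ)` are eigenvectors with eigenvalues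
`λₘ = ∑ⱼ g(θⱼ) (cos (m θⱼ) - 1)`, where `g x = -cos x - 1/(2 - 2 cos x)`. For `m = 1, 2` the
products `g(θ)(cos mθ - 1)` are polynomials in `cos θ` (for `θ ≠ 0`), and the power sums
`∑ cos θⱼ = 0`, `∑ cos² θⱼ = N/2`, `∑ cos³ θⱼ = 0` (valid as `N ∤ 1, 2, 3`) give
`λ₁ = -1/2 < 0` and `λ₂ = N - 2 > 0`.
-/

theorem mulVec_apply_eq_sum_erase_mul_sub {n R : Type*} [Fintype n] [DecidableEq n] [Ring R]
    (A : Matrix n n R) (hdiag : ∀ i, A i i = -∑ j ∈ univ.erase i, A i j) (v : n → R) (i : n) :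
    (A *ᵥ v) i = ∑ j ∈ univ.erase i, A i j * (v j - v i) := by
  rw [mulVec, dotProduct, ← add_sum_erase _ _ (mem_univ i), hdiag, neg_mul, sum_mul]
  simp only [mul_sub, sum_sub_distrib]
  abel

section Ngon

variable {N : ℕ}

noncomputable def ngonAngle (N : ℕ) (j : Fin N) : ℝ := 2 * π * (j : ℕ) / N

@[simp]
lemma ngonAngle_zero [NeZero N] : ngonAngle N 0 = 0 := by
  simp [ngonAngle]

lemma cos_ngonAngle_ne_one [NeZero N] {j : Fin N} (hj : j ≠ 0) : cos (ngonAngle N j) ≠ 1 := by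
  have hN : (0 : ℝ) < N := by exact_mod_cast j.pos
  have hj0 : (0 : ℝ) < (j : ℕ) := by exact_mod_cast Nat.pos_of_ne_zero (Fin.val_ne_zero_iff.mpr hj)
  have hjN : ((j : ℕ) : ℝ) < N := by exact_mod_cast j.isLt
  have hθ : 0 < ngonAngle N j := div_pos (by positivity) hN
  rw [ne_eq, cos_eq_one_iff_of_lt_of_lt (by linarith [pi_pos])]
  · exact hθ.ne'
  · rw [ngonAngle, div_lt_iff₀ hN]
    nlinarith [pi_pos]

lemma Function.Periodic.apply_ngonAngle_sub [NeZero N] {F : ℝ → ℝ}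
    (hF : Function.Periodic F (2 * π)) (j k : Fin N) :
    F (ngonAngle N (j - k)) = F (ngonAngle N j - ngonAngle N k) := by
  have hN : (N : ℝ) ≠ 0 := Nat.cast_ne_zero.mpr (NeZero.ne N)
  rcases le_or_gt k j with hkj | hjk
  · rw [ngonAngle, Fin.coe_sub_iff_le.mpr hkj, Nat.cast_sub hkj, ngonAngle, ngonAngle]
    ring_nf
  · rw [ngonAngle, Fin.coe_sub_iff_lt.mpr hjk, Nat.cast_sub (by omega), Nat.cast_add]
    convert hF (ngonAngle N j - ngonAngle N k) using 2
    unfold ngonAngle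
    field_simp
    ring

lemma sum_ngonAngle_sub [NeZero N] {F : ℝ → ℝ} (hF : Function.Periodic F (2 * π)) (k : Fin N) :
    ∑ j, F (ngonAngle N j - ngonAngle N k) = ∑ j, F (ngonAngle N j) := by
  simp_rw [← hF.apply_ngonAngle_sub]
  exact Equiv.sum_comp (Equiv.subRight k) (fun j => F (ngonAngle N j))

lemma sum_ngonAngle_eq_zero_of_odd [NeZero N] {F : ℝ → ℝ} (hF : Function.Periodic F (2 * π))
    (hodd : Function.Odd F) : ∑ j, F (ngonAngle N j) = 0 := by
  have hrefl : ∑ j, F (ngonAngle N (0 - j)) = ∑ j, F (ngonAngle N j) :=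
    Equiv.sum_comp (Equiv.subLeft 0) (fun j => F (ngonAngle N j))
  simp_rw [hF.apply_ngonAngle_sub] at hrefl
  simp only [ngonAngle_zero, zero_sub, hodd _, sum_neg_distrib] at hrefl
  linarith

lemma sum_ngonAngle_eq_sub_of_cos_ne_one [NeZero N] {f p : ℝ → ℝ} (hf : f 0 = 0)
    (hfp : ∀ x, cos x ≠ 1 → f x = p x) :
    ∑ j, f (ngonAngle N j) = ∑ j, p (ngonAngle N j) - p 0 := by
  rw [← ngonAngle_zero (N := N), ← sum_erase_eq_sub (mem_univ 0),
    ← sum_erase univ (f := fun j => f (ngonAngle N j)) (a := 0) (by simpa using hf)]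
  exact sum_congr rfl fun j hj => hfp _ (cos_ngonAngle_ne_one (ne_of_mem_erase hj))

lemma sum_cos_mul_ngonAngle {t : ℕ} (ht : 0 < t) (htN : t < N) :
    ∑ j : Fin N, cos (t * ngonAngle N j) = 0 := by
  have hN : (0 : ℝ) < N := by exact_mod_cast ht.trans htN
  have hsin : sin (π * t / N) ≠ 0 := by
    refine (sin_pos_of_pos_of_lt_pi (by positivity) ?_).ne'
    rw [div_lt_iff₀ hN]
    exact mul_lt_mul_of_pos_left (by exact_mod_cast htN) pi_pos
  have key := sin_mul_sum_cos N (2 * π * t / N) 0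
  rw [show (N : ℝ) * (2 * π * t / N) / 2 = t * π by field_simp, sin_nat_mul_pi, zero_mul,
    show 2 * π * t / N / 2 = π * t / N by ring] at key
  rw [← (mul_eq_zero_iff_left hsin).mp key, ← Fin.sum_univ_eq_sum_range]
  refine sum_congr rfl fun j _ => congrArg cos ?_
  rw [ngonAngle]
  ring

lemma sum_cos_ngonAngle (hN : 2 ≤ N) : ∑ j : Fin N, cos (ngonAngle N j) = 0 := by
  simpa using sum_cos_mul_ngonAngle (t := 1) one_pos hN

lemma sum_cos_ngonAngle_sq (hN : 3 ≤ N) : ∑ j : Fin N, cos (ngonAngle N j) ^ 2 = N / 2 := by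
  have h2 : ∑ j : Fin N, cos (2 * ngonAngle N j) = 0 := by
    exact_mod_cast sum_cos_mul_ngonAngle (t := 2) two_pos hN
  simp only [cos_sq, sum_add_distrib, ← sum_div, h2, sum_const, card_univ, Fintype.card_fin,
    nsmul_eq_mul]
  ring

lemma sum_cos_ngonAngle_pow_three (hN : 4 ≤ N) : ∑ j : Fin N, cos (ngonAngle N j) ^ 3 = 0 := by
  have h3 : ∑ j : Fin N, cos (3 * ngonAngle N j) = 0 := by
    exact_mod_cast sum_cos_mul_ngonAngle (t := 3) three_pos hN
  have h1 := sum_cos_ngonAngle (N := N) (by omega)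
  simp only [cos_three_mul, sum_sub_distrib, ← mul_sum, h1] at h3
  linarith

lemma cos_mul_ngonAngle_ne_zero [NeZero N] (m : ℕ) :
    (fun j : Fin N => cos (m * ngonAngle N j)) ≠ 0 :=
  fun h => by simpa using congrFun h 0

theorem mulVec_cos_mul_ngonAngle [NeZero N] (H : Matrix (Fin N) (Fin N) ℝ) {g : ℝ → ℝ}
    (hg : Function.Periodic g (2 * π)) (hg_even : Function.Even g)
    (hoff : ∀ i j, i ≠ j → H i j = g (ngonAngle N i - ngonAngle N j))
    (hdiag : ∀ i, H i i = -∑ j ∈ univ.erase i, H i j) (m : ℕ) :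
    H *ᵥ (fun j => cos (m * ngonAngle N j)) =
      (∑ j, g (ngonAngle N j) * (cos (m * ngonAngle N j) - 1)) •
        fun j => cos (m * ngonAngle N j) := by
  ext k
  set θ := ngonAngle N
  have hcos_sub : ∀ j, cos (m * θ j) - cos (m * θ k) =
      cos (m * θ k) * (cos (m * (θ j - θ k)) - 1) - sin (m * θ k) * sin (m * (θ j - θ k)) := by
    intro j
    rw [show m * θ j = m * θ k + m * (θ j - θ k) by ring, cos_add]
    ring
  have hsin_sum : ∑ j, g (θ j - θ k) * sin (m * (θ j - θ k)) = 0 := by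
    rw [sum_ngonAngle_sub (F := fun x => g x * sin (m * x))
      (fun x => by simp only [hg x, mul_add, sin_add_nat_mul_two_pi])]
    exact sum_ngonAngle_eq_zero_of_odd (F := fun x => g x * sin (m * x))
      (fun x => by simp only [hg x, mul_add, sin_add_nat_mul_two_pi])
      (fun x => by simp only [hg_even x, mul_neg, sin_neg])
  have hcos_sum : ∑ j, g (θ j - θ k) * (cos (m * (θ j - θ k)) - 1) =
      ∑ j, g (θ j) * (cos (m * θ j) - 1) :=
    sum_ngonAngle_sub (F := fun x => g x * (cos (m * x) - 1))
      (fun x => by simp only [hg x, mul_add, cos_add_nat_mul_two_pi]) k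
  calc (H *ᵥ fun j => cos (m * θ j)) k
      = ∑ j ∈ univ.erase k, H k j * (cos (m * θ j) - cos (m * θ k)) :=
        mulVec_apply_eq_sum_erase_mul_sub H hdiag _ k
    _ = ∑ j, g (θ j - θ k) * (cos (m * θ j) - cos (m * θ k)) := by
        rw [← sum_erase univ (a := k) (by simp)]
        refine sum_congr rfl fun j hj => ?_
        rw [hoff k j (ne_of_mem_erase hj).symm, ← hg_even, neg_sub]
    _ = cos (m * θ k) * ∑ j, g (θ j - θ k) * (cos (m * (θ j - θ k)) - 1)
          - sin (m * θ k) * ∑ j, g (θ j - θ k) * sin (m * (θ j - θ k)) := by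
        simp only [hcos_sub, mul_sum, ← sum_sub_distrib]
        exact sum_congr rfl fun j _ => by ring
    _ = _ := by
        rw [hsin_sum, hcos_sum, Pi.smul_apply, smul_eq_mul]
        ring

end Ngon

/-- `-φ''` for the pair potential `φ x = -(cos x + log (2 - 2 cos x) / 2)` of `V`. -/
noncomputable def pairHessian (x : ℝ) : ℝ := -cos x - 1 / (2 - 2 * cos x)

lemma pairHessian_periodic : Function.Periodic pairHessian (2 * π) := fun x => by
  simp only [pairHessian, cos_add_two_pi]

lemma pairHessian_even : Function.Even pairHessian := fun x => by
  simp only [pairHessian, cos_neg]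

lemma pairHessian_mul_cos_sub_one {x : ℝ} (hx : cos x ≠ 1) :
    pairHessian x * (cos x - 1) = -cos x ^ 2 + cos x + 1 / 2 := by
  have : 2 - 2 * cos x ≠ 0 := fun h => hx (by linarith)
  rw [pairHessian]
  field_simp
  ring

lemma pairHessian_mul_cos_two_mul_sub_one {x : ℝ} (hx : cos x ≠ 1) :
    pairHessian x * (cos (2 * x) - 1) = -2 * cos x ^ 3 + 3 * cos x + 1 := by
  have : 2 - 2 * cos x ≠ 0 := fun h => hx (by linarith)
  rw [pairHessian, cos_two_mul]
  field_simp
  ring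

section Eigenvalues

variable {N : ℕ} [NeZero N]

lemma sum_pairHessian_mul_cos_sub_one (hN : 3 ≤ N) :
    ∑ j : Fin N, pairHessian (ngonAngle N j) * (cos (ngonAngle N j) - 1) = -1 / 2 := by
  rw [sum_ngonAngle_eq_sub_of_cos_ne_one (by simp) fun x => pairHessian_mul_cos_sub_one]
  simp only [sum_add_distrib, sum_neg_distrib, sum_cos_ngonAngle_sq hN,
    sum_cos_ngonAngle (by omega : 2 ≤ N), sum_const, card_univ, Fintype.card_fin, nsmul_eq_mul,
    cos_zero]
  ring

lemma sum_pairHessian_mul_cos_two_mul_sub_one (hN : 4 ≤ N) :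
    ∑ j : Fin N, pairHessian (ngonAngle N j) * (cos (2 * ngonAngle N j) - 1) = N - 2 := by
  rw [sum_ngonAngle_eq_sub_of_cos_ne_one (by simp) fun x => pairHessian_mul_cos_two_mul_sub_one]
  simp only [sum_add_distrib, ← mul_sum, sum_cos_ngonAngle_pow_three hN,
    sum_cos_ngonAngle (by omega : 2 ≤ N), sum_const, card_univ, Fintype.card_fin, nsmul_eq_mul,
    cos_zero]
  ring

end Eigenvalues

theorem ngon_hessian_has_pos_and_neg_eigenvalue
    (N : ℕ) (hN : 4 ≤ N) (H : Matrix (Fin N) (Fin N) ℝ)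
    (hoff : ∀ i j : Fin N, i ≠ j →
      H i j = - Real.cos (2 * π * (((i : ℕ) : ℝ) - ((j : ℕ) : ℝ)) / N)
        - 1 / (2 - 2 * Real.cos (2 * π * (((i : ℕ) : ℝ) - ((j : ℕ) : ℝ)) / N)))
    (hdiag : ∀ i : Fin N, H i i = - ∑ j ∈ Finset.univ.erase i, H i j) :
    (∃ (μ : ℝ) (v : Fin N → ℝ), 0 < μ ∧ v ≠ 0 ∧ H.mulVec v = μ • v) ∧
    (∃ (μ : ℝ) (v : Fin N → ℝ), μ < 0 ∧ v ≠ 0 ∧ H.mulVec v = μ • v) := by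
  have : NeZero N := ⟨by omega⟩
  have hH : ∀ i j, i ≠ j → H i j = pairHessian (ngonAngle N i - ngonAngle N j) :=
    fun i j hij => by rw [hoff i j hij, pairHessian, ngonAngle, ngonAngle, ← sub_div, ← mul_sub]
  have heig := mulVec_cos_mul_ngonAngle H pairHessian_periodic pairHessian_even hH hdiag
  have h2 := heig 2
  have h1 := heig 1
  rw [Nat.cast_ofNat, sum_pairHessian_mul_cos_two_mul_sub_one hN] at h2
  simp only [Nat.cast_one, one_mul] at h1
  rw [sum_pairHessian_mul_cos_sub_one (by omega)] at h1
  have hN' : (4 : ℝ) ≤ N := by exact_mod_cast hN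
  exact ⟨⟨_, _, by linarith, by simpa using cos_mul_ngonAngle_ne_zero (N := N) 2, h2⟩,
    ⟨_, _, by norm_num, by simpa using cos_mul_ngonAngle_ne_zero (N := N) 1, h1⟩⟩
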